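/- Let W be a free abelian group of rank d+1 and let p be a prime, n ≥ 1. Then every element of (⋀^d W)/p^n W is a 'pure tensor', i.e., of the form (a/p^n) ⊗ u₁∧…∧u_d for some a ∈ ℤ and u₁,…,u_d ∈ W. More precisely, the sum of two such pure tensors in ⋀^d W ⊗ ℚ_p/ℤ_p is again a pure tensor. -/

import Mathlib

/-!
Any two elements of `ℚ_p/ℤ_p` are integer multiples of a common one, so everything reduces to
showing that the multiples `r • u₁ ∧ ⋯ ∧ u_d` of decomposable vectors in `⋀^d W` are closed under
addition. Given `u` and `w`, choose hyperplanes `A ⊇ ⟨u⟩` and `B ⊇ ⟨w⟩` of `ℚ ⊗ W`; since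
`dim (A ∩ B) ≥ d - 1`, it contains a subspace `P` of dimension `d - 1`. The lattice `P ∩ W` is
saturated of corank one in `A ∩ W` and in `B ∩ W`, so for a basis `c` of it there are `y`, `z` with
`A ∩ W ⊆ ⟨c, y⟩` and `B ∩ W ⊆ ⟨c, z⟩`. Then `∧u = m • (c ∧ y)` and `∧w = n • (c ∧ z)`, whose sum
is `c ∧ (m • y + n • z)`.
-/

open TensorProduct

set_option synthInstance.maxHeartbeats 1000000
set_option maxHeartbeats 1000000

/-- The subgroup `ℤ_p ⊆ ℚ_p`, as a `ℤ`-submodule. -/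
noncomputable def ZpInQp (p : ℕ) [Fact p.Prime] : Submodule ℤ ℚ_[p] :=
  Submodule.span ℤ (Set.range ((↑) : ℤ_[p] → ℚ_[p]))

/-- The group `ℚ_p/ℤ_p`, as a `ℤ`-module. -/
noncomputable abbrev QpZp (p : ℕ) [Fact p.Prime] : Type := ℚ_[p] ⧸ ZpInQp p

open Module Submodule nonZeroDivisors

section Padic

open Filter

variable {p : ℕ} [Fact p.Prime]

theorem mem_ZpInQp_iff {x : ℚ_[p]} : x ∈ ZpInQp p ↔ ‖x‖ ≤ 1 := by
  refine ⟨fun hx => ?_, fun hx => subset_span ⟨⟨x, hx⟩, rfl⟩⟩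
  induction hx using span_induction with
  | mem _ h =>
    obtain ⟨y, rfl⟩ := h
    exact y.2
  | zero => simp
  | add x y _ _ hx hy => exact (Padic.nonarchimedean x y).trans (max_le hx hy)
  | smul a x _ hx =>
    rw [zsmul_eq_mul, norm_mul]
    exact mul_le_one₀ (Padic.norm_int_le_one a) (norm_nonneg x) hx

theorem eventually_norm_pow_mul_le_one (q : ℚ_[p]) :
    ∀ᶠ m in atTop, ‖(p : ℚ_[p]) ^ m * q‖ ≤ 1 := by
  have h : Tendsto (fun m => ‖(p : ℚ_[p])‖ ^ m * ‖q‖) atTop (nhds 0) := by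
    simpa using (tendsto_pow_atTop_nhds_zero_of_lt_one (norm_nonneg _)
      (Padic.norm_p_lt_one (p := p))).mul_const ‖q‖
  filter_upwards [h.eventually (ge_mem_nhds zero_lt_one)] with m hm
  simpa [norm_mul, norm_pow] using hm

theorem QpZp.exists_eq_zsmul_mk_inv_pow {q : ℚ_[p]} {m : ℕ} (hq : ‖(p : ℚ_[p]) ^ m * q‖ ≤ 1) :
    ∃ a : ℤ,
      (Submodule.Quotient.mk q : QpZp p) = a • Submodule.Quotient.mk ((p : ℚ_[p]) ^ m)⁻¹ := by
  let x : ℤ_[p] := ⟨_, hq⟩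
  obtain ⟨y, hxy⟩ := Ideal.mem_span_singleton'.mp (PadicInt.appr_spec m x)
  refine ⟨x.appr m, ?_⟩
  rw [← Submodule.Quotient.mk_smul, Submodule.Quotient.eq, mem_ZpInQp_iff]
  have hp : (p : ℚ_[p]) ≠ 0 := Nat.cast_ne_zero.mpr (Fact.out : p.Prime).ne_zero
  have hy : (y : ℚ_[p]) * (p : ℚ_[p]) ^ m = (p : ℚ_[p]) ^ m * q - (x.appr m : ℕ) := by
    simpa using congrArg ((↑) : ℤ_[p] → ℚ_[p]) hxy
  have : q - (x.appr m : ℤ) • ((p : ℚ_[p]) ^ m)⁻¹ = y := by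
    rw [zsmul_eq_mul, Int.cast_natCast]
    field_simp
    linear_combination -hy
  rw [this]
  exact y.2

theorem QpZp.exists_eq_zsmul_pair (c c' : QpZp p) :
    ∃ (c₀ : QpZp p) (a b : ℤ), c = a • c₀ ∧ c' = b • c₀ := by
  obtain ⟨q, rfl⟩ := Submodule.Quotient.mk_surjective _ c
  obtain ⟨q', rfl⟩ := Submodule.Quotient.mk_surjective _ c'
  obtain ⟨m, hq, hq'⟩ :=
    ((eventually_norm_pow_mul_le_one q).and (eventually_norm_pow_mul_le_one q')).exists
  obtain ⟨a, ha⟩ := QpZp.exists_eq_zsmul_mk_inv_pow hq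
  obtain ⟨b, hb⟩ := QpZp.exists_eq_zsmul_mk_inv_pow hq'
  exact ⟨_, a, b, ha, hb⟩

end Padic

section VectorSpace

variable {K V : Type*} [DivisionRing K] [AddCommGroup V] [Module K V]

theorem Submodule.exists_le_finrank_eq (S : Submodule K V) [FiniteDimensional K S] {m : ℕ}
    (hm : m ≤ finrank K S) : ∃ T ≤ S, finrank K T = m := by
  let b := Module.finBasis K S
  have hli : LinearIndependent K (S.subtype ∘ b ∘ Fin.castLE hm) :=
    (b.linearIndependent.map' _ S.ker_subtype).comp _ (Fin.castLE_injective hm)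
  refine ⟨span K (Set.range (S.subtype ∘ b ∘ Fin.castLE hm)), ?_, ?_⟩
  · rw [span_le]
    rintro _ ⟨i, rfl⟩
    exact (b _).2
  · rw [finrank_span_eq_card hli, Fintype.card_fin]

theorem Submodule.exists_ge_finrank_add_one_eq [FiniteDimensional K V] (S : Submodule K V)
    (hS : S ≠ ⊤) : ∃ A ≥ S, finrank K A + 1 = finrank K V := by
  obtain ⟨φ, hφ, hSφ⟩ := S.exists_le_ker_of_lt_top hS.lt_top
  exact ⟨_, hSφ, Module.Dual.finrank_ker_add_one_of_ne_zero hφ⟩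

end VectorSpace

theorem Submodule.exists_le_sup_span_singleton {R M : Type*} [CommRing R] [IsDomain R]
    [IsPrincipalIdealRing R] [AddCommGroup M] [Module R M] {N L : Submodule R M} [Module.Finite R L]
    (hNL : N ≤ L) (hN : ∀ (r : R) (x : M), r ≠ 0 → r • x ∈ N → x ∈ N)
    (hrank : finrank R L = finrank R N + 1) : ∃ y, L ≤ N ⊔ R ∙ y := by
  set N' := N.comap L.subtype
  have : IsTorsionFree R (L ⧸ N') := .of_smul_eq_zero fun r x hrx => by
    obtain ⟨x, rfl⟩ := N'.mkQ_surjective x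
    rw [mkQ_apply, ← Quotient.mk_smul, Quotient.mk_eq_zero] at hrx
    rw [mkQ_apply, Quotient.mk_eq_zero, or_iff_not_imp_left]
    exact fun hr => hN r x hr hrx
  have hQ : finrank R (L ⧸ N') = 1 := by
    have := N'.finrank_quotient_add_finrank
    rw [(comapSubtypeEquivOfLe hNL).finrank_eq] at this
    omega
  let b := Module.finBasisOfFinrankEq R _ hQ
  obtain ⟨y, hy⟩ := N'.mkQ_surjective (b 0)
  refine ⟨y, fun x hx => ?_⟩
  obtain ⟨r, hr⟩ : ∃ r : R, r • b 0 = N'.mkQ ⟨x, hx⟩ := by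
    have hb : R ∙ b 0 = ⊤ := by rw [← b.span_eq, Set.range_unique]; rfl
    exact mem_span_singleton.mp (hb ▸ mem_top)
  rw [← hy, ← map_smul, mkQ_apply, mkQ_apply, Quotient.eq] at hr
  exact mem_sup.mpr ⟨_, N.neg_mem hr, r • y, mem_span_singleton.mpr ⟨r, rfl⟩, by simp⟩

theorem Submodule.span_range_subtype_comp_basis {R M : Type*} [CommRing R] [AddCommGroup M]
    [Module R M] (N : Submodule R M) {ι : Type*} (b : Basis ι R N) :
    span R (Set.range (N.subtype ∘ b)) = N := by
  rw [Set.range_comp, span_image, b.span_eq, map_top, range_subtype]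

section Localization

variable {R K M V : Type*} [CommRing R] [Field K] [Algebra R K] [IsFractionRing R K]
  [AddCommGroup M] [Module R M] [AddCommGroup V] [Module R V] [Module K V] [IsScalarTower R K V]
  (f : M →ₗ[R] V)

/- For a localization `f : M → V` at the nonzero elements, `(S.restrictScalars R).comap f` is the
lattice `S ∩ M` of a subspace `S` of `V`. -/

theorem finrank_comap_restrictScalars [IsLocalizedModule R⁰ f] (S : Submodule K V) :
    finrank R ((S.restrictScalars R).comap f) = finrank K S := by
  rw [← IsLocalizedModule.finrank_eq R⁰ (toLocalized' K R⁰ f _) le_rfl,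
    ← IsFractionRing.finrank_right_eq R K, (localized'gi K R⁰ f).l_u_eq S]

theorem mem_of_smul_mem_comap_restrictScalars {S : Submodule K V} {r : R} {x : M} (hr : r ≠ 0)
    (h : r • x ∈ (S.restrictScalars R).comap f) : x ∈ (S.restrictScalars R).comap f := by
  rw [mem_comap, restrictScalars_mem, map_smul, ← algebraMap_smul K] at h
  exact (S.smul_mem_iff ((map_ne_zero_iff _ (IsFractionRing.injective R K)).mpr hr)).mp h

theorem exists_comap_le_span_snoc [IsDomain R] [IsPrincipalIdealRing R] [Module.Finite R M]
    [IsLocalizedModule R⁰ f] {P S : Submodule K V} (hPS : P ≤ S)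
    (hS : finrank K S = finrank K P + 1) {e : ℕ} (c : Fin e → M)
    (hc : span R (Set.range c) = (P.restrictScalars R).comap f) :
    ∃ y, (S.restrictScalars R).comap f ≤ span R (Set.range (Fin.snoc c y)) := by
  obtain ⟨y, hy⟩ := exists_le_sup_span_singleton (L := (S.restrictScalars R).comap f)
    (fun x hx => hPS hx) (fun r x hr => mem_of_smul_mem_comap_restrictScalars f hr)
    (by rw [finrank_comap_restrictScalars, finrank_comap_restrictScalars, hS])
  refine ⟨y, hy.trans_eq ?_⟩
  rw [Fin.range_snoc, span_insert, hc, sup_comm]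

end Localization

theorem exists_forall_mem_span_snoc {R M : Type*} [CommRing R] [IsDomain R]
    [IsPrincipalIdealRing R] [AddCommGroup M] [Module R M] [Module.Free R M] [Module.Finite R M]
    {e : ℕ} (hM : finrank R M = e + 2) (u w : Fin (e + 1) → M) :
    ∃ (c : Fin e → M) (y z : M), (∀ i, u i ∈ span R (Set.range (Fin.snoc c y))) ∧
      ∀ i, w i ∈ span R (Set.range (Fin.snoc c z)) := by
  let K := FractionRing R
  let f := TensorProduct.mk R K M 1
  have hV : finrank K (K ⊗[R] M) = e + 2 := by rw [finrank_baseChange, hM]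
  have hyperplane (u : Fin (e + 1) → M) :
      ∃ A : Submodule K (K ⊗[R] M), finrank K A = e + 1 ∧ ∀ i, f (u i) ∈ A := by
    have hspan : span K (Set.range (f ∘ u)) ≠ ⊤ := fun h => by
      have := finrank_range_le_card (R := K) (f ∘ u)
      rw [Set.finrank, h, finrank_top, hV, Fintype.card_fin] at this
      omega
    obtain ⟨A, huA, hA⟩ := exists_ge_finrank_add_one_eq _ hspan
    exact ⟨A, by omega, fun i => huA (subset_span ⟨i, rfl⟩)⟩
  obtain ⟨A, hA, huA⟩ := hyperplane u
  obtain ⟨B, hB, hwB⟩ := hyperplane w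
  have hAB : e ≤ finrank K ↥(A ⊓ B) := by
    have := finrank_sup_add_finrank_inf_eq A B
    have := (A ⊔ B).finrank_le
    omega
  obtain ⟨P, hPAB, hP⟩ := (A ⊓ B).exists_le_finrank_eq hAB
  let b : Basis (Fin e) R ((P.restrictScalars R).comap f) :=
    finBasisOfFinrankEq R _ ((finrank_comap_restrictScalars f P).trans hP)
  obtain ⟨y, hy⟩ := exists_comap_le_span_snoc f (hPAB.trans inf_le_left) (by omega) _
    (span_range_subtype_comp_basis _ b)
  obtain ⟨z, hz⟩ := exists_comap_le_span_snoc f (hPAB.trans inf_le_right) (by omega) _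
    (span_range_subtype_comp_basis _ b)
  exact ⟨_, y, z, fun i => hy (huA i), fun i => hz (hwB i)⟩

theorem AlternatingMap.exists_eq_smul_of_forall_mem_span {R M N ι : Type*} [CommRing R]
    [AddCommGroup M] [Module R M] [AddCommGroup N] [Module R N] [Fintype ι]
    (f : M [⋀^ι]→ₗ[R] N) {b u : ι → M} (h : ∀ i, u i ∈ span R (Set.range b)) :
    ∃ m : R, f u = m • f b := by
  classical
  choose C hC using fun i => (mem_span_range_iff_exists_fun R).mp (h i)
  suffices f u ∈ R ∙ f b by
    obtain ⟨m, hm⟩ := mem_span_singleton.mp this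
    exact ⟨m, hm.symm⟩
  rw [← funext hC]
  change f.toMultilinearMap (fun i => ∑ j, C i j • b j) ∈ _
  rw [MultilinearMap.map_sum]
  refine sum_mem fun r _ => ?_
  rw [AlternatingMap.coe_multilinearMap, f.map_smul_univ (fun i => C i (r i)) (fun i => b (r i))]
  refine smul_mem _ _ ?_
  by_cases hr : Function.Injective r
  · rw [show (fun i => b (r i)) = b ∘ Equiv.ofBijective r hr.bijective_of_finite from rfl,
      f.map_perm]
    exact zsmul_mem (mem_span_singleton_self _) _
  · obtain ⟨i, j, hij, hne⟩ := Function.not_injective_iff.mp hr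
    rw [f.map_eq_zero_of_eq (fun i => b (r i)) (congrArg b hij) hne]
    exact zero_mem _

section ExteriorPower

open ExteriorAlgebra

variable {R M : Type*} [CommRing R] [IsDomain R] [IsPrincipalIdealRing R] [AddCommGroup M]
  [Module R M] [Module.Free R M] [Module.Finite R M] {d : ℕ}

theorem exists_smul_ιMulti_add_smul_ιMulti_eq (hM : finrank R M = d + 1) (a b : R)
    (u w : Fin d → M) :
    ∃ (r : R) (v : Fin d → M), a • ιMulti R d u + b • ιMulti R d w = r • ιMulti R d v := by
  cases d with
  | zero => exact ⟨a + b, u, by rw [Subsingleton.elim w u, add_smul]⟩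
  | succ e =>
    obtain ⟨c, y, z, hu, hw⟩ := exists_forall_mem_span_snoc hM u w
    obtain ⟨m, hm⟩ := (ιMulti R (e + 1)).exists_eq_smul_of_forall_mem_span hu
    obtain ⟨n, hn⟩ := (ιMulti R (e + 1)).exists_eq_smul_of_forall_mem_span hw
    have hlin (x : M) : ιMulti R (e + 1) (Fin.snoc c x) =
        (ιMulti R (e + 1) (M := M)).toMultilinearMap.curryRight c x := rfl
    refine ⟨1, Fin.snoc c ((a * m) • y + (b * n) • z), ?_⟩
    rw [one_smul, hm, hn, hlin, hlin, hlin, map_add, map_smul, map_smul, smul_smul, smul_smul]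

theorem exists_eq_smul_ιMulti_of_mem_exteriorPower (hM : finrank R M = d + 1)
    {x : ExteriorAlgebra R M} (hx : x ∈ ⋀[R]^d M) :
    ∃ (r : R) (v : Fin d → M), x = r • ιMulti R d v := by
  rw [← ιMulti_span_fixedDegree] at hx
  induction hx using span_induction with
  | mem _ h =>
    obtain ⟨v, rfl⟩ := h
    exact ⟨1, v, (one_smul _ _).symm⟩
  | zero => exact ⟨0, 0, (zero_smul _ _).symm⟩
  | add _ _ _ _ hx hy =>
    obtain ⟨r, v, rfl⟩ := hx
    obtain ⟨s, w, rfl⟩ := hy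
    exact exists_smul_ιMulti_add_smul_ιMulti_eq hM r s v w
  | smul a _ _ hx =>
    obtain ⟨r, v, rfl⟩ := hx
    exact ⟨a * r, v, smul_smul _ _ _⟩

variable {Q : Type*} [AddCommGroup Q] [Module R Q]
  (hQ : ∀ c c' : Q, ∃ (c₀ : Q) (a b : R), c = a • c₀ ∧ c' = b • c₀)
include hQ

theorem exists_ιMulti_tmul_add_ιMulti_tmul_eq (hM : finrank R M = d + 1) (u w : Fin d → M)
    (c c' : Q) : ∃ (v : Fin d → M) (c'' : Q),
      ιMulti R d u ⊗ₜ[R] c + ιMulti R d w ⊗ₜ[R] c' = ιMulti R d v ⊗ₜ[R] c'' := by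
  obtain ⟨c₀, a, b, rfl, rfl⟩ := hQ c c'
  obtain ⟨r, v, h⟩ := exists_smul_ιMulti_add_smul_ιMulti_eq hM a b u w
  refine ⟨v, r • c₀, ?_⟩
  rw [← smul_tmul, ← smul_tmul, ← add_tmul, h, smul_tmul]

theorem exists_eq_ιMulti_tmul_of_mem_range_rTensor (hM : finrank R M = d + 1)
    {x : ExteriorAlgebra R M ⊗[R] Q}
    (hx : x ∈ LinearMap.range ((⋀[R]^d M).subtype.rTensor Q)) :
    ∃ (v : Fin d → M) (c : Q), x = ιMulti R d v ⊗ₜ[R] c := by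
  obtain ⟨t, rfl⟩ := hx
  induction t using TensorProduct.induction_on with
  | zero => exact ⟨0, 0, by rw [map_zero, tmul_zero]⟩
  | tmul m c =>
    obtain ⟨r, v, hv⟩ := exists_eq_smul_ιMulti_of_mem_exteriorPower hM m.2
    exact ⟨v, r • c, by rw [LinearMap.rTensor_tmul, subtype_apply, hv, smul_tmul]⟩
  | add s t hs ht =>
    obtain ⟨v, c, hs⟩ := hs
    obtain ⟨w, c', ht⟩ := ht
    rw [map_add, hs, ht]
    exact exists_ιMulti_tmul_add_ιMulti_tmul_eq hQ hM v w c c'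

end ExteriorPower

/-- Let `W = ℤ^{d+1}` be free abelian of rank `d+1` and `p` a prime.
Every element of `(⋀^d W) ⊗ ℚ_p/ℤ_p` is a pure tensor `c ⊗ u₁∧…∧u_d` (any `a/pⁿ` being
an element `c` of `ℚ_p/ℤ_p`); more precisely, the sum of two pure tensors in
`⋀^d W ⊗ ℚ_p/ℤ_p` is again a pure tensor. -/
theorem stmt_12 (p : ℕ) [Fact p.Prime] (d : ℕ) :
    (∀ x ∈ LinearMap.range (LinearMap.rTensor (QpZp p)
        (⋀[ℤ]^d (Fin (d + 1) → ℤ)).subtype),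
      ∃ (v : Fin d → (Fin (d + 1) → ℤ)) (c : QpZp p),
        x = (ExteriorAlgebra.ιMulti ℤ d v) ⊗ₜ[ℤ] c) ∧
    (∀ (u w : Fin d → (Fin (d + 1) → ℤ)) (c c' : QpZp p),
      ∃ (v : Fin d → (Fin (d + 1) → ℤ)) (c'' : QpZp p),
        (ExteriorAlgebra.ιMulti ℤ d u) ⊗ₜ[ℤ] c + (ExteriorAlgebra.ιMulti ℤ d w) ⊗ₜ[ℤ] c' =
          (ExteriorAlgebra.ιMulti ℤ d v) ⊗ₜ[ℤ] c'') := by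
  have hW : finrank ℤ (Fin (d + 1) → ℤ) = d + 1 := finrank_fin_fun ℤ
  exact ⟨fun _ hx => exists_eq_ιMulti_tmul_of_mem_range_rTensor QpZp.exists_eq_zsmul_pair hW hx,
    exists_ιMulti_tmul_add_ιMulti_tmul_eq QpZp.exists_eq_zsmul_pair hW⟩
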